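/- arXiv:2310.18750 — 6 statements merged into one kernel-verified Lean document; each statement's English description precedes it below -/
import Mathlib

section
/- A priori MCC-KF covariance recursion: with K_p^λ = λ F P Hᵀ (R_e^λ)⁻¹ where R_e^λ = λ H P Hᵀ + R, the Joseph-form update F[(I − K^λ H) P (I − K^λ H)ᵀ + K^λ R (K^λ)ᵀ]Fᵀ + G Q Gᵀ (with K^λ = λ P Hᵀ (R_e^λ)⁻¹) equals F P Fᵀ + G Q Gᵀ − K_p^λ (H P Hᵀ + (2λ⁻¹ − 1) R) (K_p^λ)ᵀ. -/
/-!
Expanding the Joseph form gives `P - K H P - P Hᵀ Kᵀ + K (H P Hᵀ + R) Kᵀ`. For the gain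
`K = λ P Hᵀ S⁻¹` with `S = λ H P Hᵀ + R` symmetric, `K H P` is symmetric and `K S Kᵀ = λ K H P`,
so `K H P Hᵀ Kᵀ = K H P - λ⁻¹ K R Kᵀ`; substituting this gives the claim before the
propagation by `F`, which is then a congruence.
-/

open Matrix

section

variable {α : Type*} [CommRing α] {n m : Type*} [Fintype n] [Fintype m]

theorem joseph_form_eq [DecidableEq n] (P : Matrix n n α) (R : Matrix m m α)
    (H : Matrix m n α) (K : Matrix n m α) :
    (1 - K * H) * P * (1 - K * H)ᵀ + K * R * Kᵀ
      = P - K * H * P - P * Hᵀ * Kᵀ + K * (H * P * Hᵀ + R) * Kᵀ := by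
  simp only [transpose_sub, transpose_one, transpose_mul, Matrix.sub_mul, Matrix.mul_sub,
    Matrix.mul_add, Matrix.add_mul, Matrix.one_mul, Matrix.mul_one, Matrix.mul_assoc]
  abel

variable [DecidableEq m]

-- Also true when `A` is singular, where `A⁻¹ = 0`.
theorem Matrix.nonsing_inv_mul_mul_nonsing_inv (A : Matrix m m α) : A⁻¹ * A * A⁻¹ = A⁻¹ := by
  by_cases hA : IsUnit A.det
  · rw [nonsing_inv_mul A hA, Matrix.one_mul]
  · simp [nonsing_inv_apply_not_isUnit A hA]

variable {P : Matrix n n α} {S : Matrix m m α} {H : Matrix m n α} {K : Matrix n m α} {c : α}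

theorem gain_transpose (hP : P.IsSymm) (hS : S.IsSymm) (hK : K = c • (P * Hᵀ * S⁻¹)) :
    Kᵀ = c • (S⁻¹ * H * P) := by
  rw [hK, transpose_smul, transpose_mul, transpose_mul, transpose_transpose, hS.inv.eq, hP.eq,
    Matrix.mul_assoc]

theorem mul_gain_transpose (hP : P.IsSymm) (hS : S.IsSymm) (hK : K = c • (P * Hᵀ * S⁻¹)) :
    P * Hᵀ * Kᵀ = K * H * P := by
  rw [gain_transpose hP hS hK, hK]
  simp only [Matrix.mul_smul, Matrix.smul_mul, Matrix.mul_assoc]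

theorem gain_mul_mul_gain_transpose (hP : P.IsSymm) (hS : S.IsSymm)
    (hK : K = c • (P * Hᵀ * S⁻¹)) : K * S * Kᵀ = c • (K * H * P) := by
  rw [gain_transpose hP hS hK, hK]
  simp only [Matrix.mul_smul, Matrix.smul_mul, smul_smul, Matrix.mul_assoc]
  rw [← Matrix.mul_assoc S, ← Matrix.mul_assoc S⁻¹, ← Matrix.mul_assoc S⁻¹ S,
    nonsing_inv_mul_mul_nonsing_inv]

end

theorem joseph_form_eq_of_mcc_gain {𝕜 : Type*} [Field 𝕜] {n m : Type*} [Fintype n] [Fintype m]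
    [DecidableEq n] [DecidableEq m] {P : Matrix n n 𝕜} {R S : Matrix m m 𝕜} {H : Matrix m n 𝕜}
    {K : Matrix n m 𝕜} {c : 𝕜} (hP : P.IsSymm) (hR : R.IsSymm) (hc : c ≠ 0)
    (hS : S = c • (H * P * Hᵀ) + R) (hK : K = c • (P * Hᵀ * S⁻¹)) :
    (1 - K * H) * P * (1 - K * H)ᵀ + K * R * Kᵀ
      = P - K * (H * P * Hᵀ + (2 * c⁻¹ - 1) • R) * Kᵀ := by
  have hS_symm : S.IsSymm := by
    rw [hS]
    refine IsSymm.add (IsSymm.smul ?_ c) hR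
    rw [IsSymm, transpose_mul, transpose_mul, transpose_transpose, hP.eq, Matrix.mul_assoc]
  have hKHPHK : K * (H * P * Hᵀ) * Kᵀ = K * H * P - c⁻¹ • (K * R * Kᵀ) := by
    have h := gain_mul_mul_gain_transpose hP hS_symm hK
    rw [hS, Matrix.mul_add, Matrix.add_mul, Matrix.mul_smul, Matrix.smul_mul] at h
    rw [eq_sub_iff_add_eq, ← smul_right_inj hc, smul_add, smul_smul, mul_inv_cancel₀ hc,
      one_smul, h]
  rw [joseph_form_eq, mul_gain_transpose hP hS_symm hK, Matrix.mul_add, Matrix.add_mul,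
    Matrix.mul_add, Matrix.add_mul, Matrix.mul_smul, Matrix.smul_mul, hKHPHK]
  module

theorem apriori_mcckf_cov_recursion_general {n m q : ℕ}
    (P F : Matrix (Fin n) (Fin n) ℝ) (R : Matrix (Fin m) (Fin m) ℝ)
    (Q : Matrix (Fin q) (Fin q) ℝ) (H : Matrix (Fin m) (Fin n) ℝ)
    (G : Matrix (Fin n) (Fin q) ℝ) (lam : ℝ)
    (hP : P.PosDef) (hR : R.PosDef) (hlam : 0 < lam)
    (Re Klam Kplam : Matrix _ _ ℝ)
    (hRe : Re = lam • (H * P * Hᵀ) + R)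
    (hKlam : Klam = lam • (P * Hᵀ * Re⁻¹))
    (hKplam : Kplam = F * Klam) :
    F * ((1 - Klam * H) * P * (1 - Klam * H)ᵀ + Klam * R * Klamᵀ) * Fᵀ + G * Q * Gᵀ
      = F * P * Fᵀ + G * Q * Gᵀ
        - Kplam * (H * P * Hᵀ + (2 * lam⁻¹ - 1) • R) * Kplamᵀ := by
  rw [joseph_form_eq_of_mcc_gain (isHermitian_iff_isSymm.mp hP.isHermitian)
    (isHermitian_iff_isSymm.mp hR.isHermitian) hlam.ne' hRe hKlam, hKplam, transpose_mul]
  simp only [Matrix.mul_sub, Matrix.sub_mul, Matrix.mul_assoc]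
  abel

theorem apriori_mcckf_cov_recursion {n m q : ℕ}
    (P F : Matrix (Fin n) (Fin n) ℝ) (R : Matrix (Fin m) (Fin m) ℝ)
    (Q : Matrix (Fin q) (Fin q) ℝ) (H : Matrix (Fin m) (Fin n) ℝ)
    (G : Matrix (Fin n) (Fin q) ℝ) (lam : ℝ)
    (hP : P.PosDef) (hR : R.PosDef) (hQ : Q.IsSymm) (hlam : 0 < lam)
    (Re Klam Kplam : Matrix _ _ ℝ)
    (hRe : Re = lam • (H * P * Hᵀ) + R)
    (hKlam : Klam = lam • (P * Hᵀ * Re⁻¹))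
    (hKplam : Kplam = F * Klam) :
    F * ((1 - Klam * H) * P * (1 - Klam * H)ᵀ + Klam * R * Klamᵀ) * Fᵀ + G * Q * Gᵀ
      = F * P * Fᵀ + G * Q * Gᵀ
        - Kplam * (H * P * Hᵀ + (2 * lam⁻¹ - 1) • R) * Kplamᵀ :=
  apriori_mcckf_cov_recursion_general P F R Q H G lam hP hR hlam Re Klam Kplam hRe hKlam hKplam
end

section
/- Array algorithm correctness (innovation block): if an orthogonal matrix 𝒬 maps the block pre-array A = [[R^{1/2}, √λ H S, 0], [0, F S, G Q^{1/2}]] to a block lower-triangular post-array [[X, 0, 0], [Y, Z, 0]], then X Xᵀ = λ H S Sᵀ Hᵀ + R^{1/2} R^{T/2}, i.e. X is a square root of R_e^λ = λ H P Hᵀ + R with P = S Sᵀ. -/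
/-! Right multiplication by an orthogonal matrix preserves the Gram matrix `A * Aᵀ`. Comparing the
upper-left blocks of the Gram matrices of the pre-array and the post-array gives
`X Xᵀ = R^{1/2} R^{T/2} + (√λ H S)(√λ H S)ᵀ`. -/

open Matrix

namespace Matrix

variable {ι κ μ ν R : Type*} [Fintype μ] [Fintype ν] [CommSemiring R]

theorem mul_transpose_eq_of_mul_eq [Fintype κ] [DecidableEq κ] {A B : Matrix ι κ R}
    {U : Matrix κ κ R} (hU : U * Uᵀ = 1) (h : A * U = B) : A * Aᵀ = B * Bᵀ := by
  rw [← h, transpose_mul, Matrix.mul_assoc, ← Matrix.mul_assoc U, hU, Matrix.one_mul]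

theorem fromCols_mul_transpose_fromCols (A : Matrix ι μ R) (B : Matrix ι ν R) :
    fromCols A B * (fromCols A B)ᵀ = A * Aᵀ + B * Bᵀ := by
  rw [transpose_fromCols, fromCols_mul_fromRows]

theorem toBlocks₁₁_mul_transpose_fromBlocks (A : Matrix ι μ R) (B : Matrix ι ν R)
    (C : Matrix κ μ R) (D : Matrix κ ν R) :
    (fromBlocks A B C D * (fromBlocks A B C D)ᵀ).toBlocks₁₁ = A * Aᵀ + B * Bᵀ := by
  rw [fromBlocks_transpose, fromBlocks_multiply, toBlocks_fromBlocks₁₁]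

end Matrix

theorem array_innovation_block {n m q : ℕ}
    (S F : Matrix (Fin n) (Fin n) ℝ) (Rh : Matrix (Fin m) (Fin m) ℝ)
    (Qh : Matrix (Fin q) (Fin q) ℝ) (H : Matrix (Fin m) (Fin n) ℝ)
    (G : Matrix (Fin n) (Fin q) ℝ) (lam : ℝ) (hlam : 0 < lam)
    (Qo : Matrix (Fin m ⊕ (Fin n ⊕ Fin q)) (Fin m ⊕ (Fin n ⊕ Fin q)) ℝ)
    (hQo : Qo * Qoᵀ = 1)
    (X : Matrix (Fin m) (Fin m) ℝ) (Y : Matrix (Fin n) (Fin m) ℝ)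
    (Z : Matrix (Fin n) (Fin n) ℝ)
    (hA : (fromBlocks Rh (fromCols (Real.sqrt lam • (H * S)) 0)
            0 (fromCols (F * S) (G * Qh))) * Qo
          = fromBlocks X (fromCols 0 0) Y (fromCols Z 0)) :
    X * Xᵀ = lam • (H * (S * Sᵀ) * Hᵀ) + Rh * Rhᵀ := by
  have gram := congrArg toBlocks₁₁ (mul_transpose_eq_of_mul_eq hQo hA)
  simp only [toBlocks₁₁_mul_transpose_fromBlocks, fromCols_mul_transpose_fromCols] at gram
  have hsqrt : Real.sqrt lam * Real.sqrt lam = lam := Real.mul_self_sqrt hlam.le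
  calc X * Xᵀ = Rh * Rhᵀ + Real.sqrt lam • (H * S) * (Real.sqrt lam • (H * S))ᵀ := by
        simpa using gram.symm
    _ = lam • (H * (S * Sᵀ) * Hᵀ) + Rh * Rhᵀ := by
        rw [add_comm, transpose_smul, Matrix.smul_mul, Matrix.mul_smul, smul_smul,
          hsqrt, transpose_mul, Matrix.mul_assoc, Matrix.mul_assoc, Matrix.mul_assoc]
end

section
/- Array algorithm correctness (gain block): under the block triangularization A 𝒬 = [[X,0,0],[Y,Z,0]] of the pre-array A = [[R^{1/2}, √λ H S, 0], [0, F S, G Q^{1/2}]], one has X Yᵀ = √λ H S Sᵀ Fᵀ; hence if X is invertible then Y = √λ F P Hᵀ X^{−T} with P = S Sᵀ. -/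
open Matrix

namespace Matrix

variable {R : Type*} [CommRing R] {k l m n p : Type*}

theorem mul_mul_transpose_of_mul_transpose_eq_one [Fintype m] [Fintype n] [DecidableEq n]
    (A : Matrix m n R) {Q : Matrix n n R} (hQ : Q * Qᵀ = 1) :
    A * Q * (A * Q)ᵀ = A * Aᵀ := by
  rw [transpose_mul, Matrix.mul_assoc, ← Matrix.mul_assoc Q, hQ, Matrix.one_mul]

theorem fromCols_mul_transpose_fromCols_s7 [Fintype m] [Fintype n]
    (A : Matrix l m R) (B : Matrix l n R) (C : Matrix p m R) (D : Matrix p n R) :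
    fromCols A B * (fromCols C D)ᵀ = A * Cᵀ + B * Dᵀ := by
  rw [transpose_fromCols, fromCols_mul_fromRows]

theorem toBlocks₁₂_fromBlocks_mul_transpose [Fintype m] [Fintype n]
    (A : Matrix l m R) (B : Matrix l n R) (C : Matrix k m R) (D : Matrix k n R) :
    (fromBlocks A B C D * (fromBlocks A B C D)ᵀ).toBlocks₁₂ = A * Cᵀ + B * Dᵀ := by
  rw [fromBlocks_transpose, fromBlocks_multiply, toBlocks_fromBlocks₁₂]

theorem eq_transpose_mul_inv_transpose_of_mul_transpose_eq [Fintype m] [DecidableEq m]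
    {X : Matrix m m R} {Y : Matrix n m R} {M : Matrix m n R} (hXY : X * Yᵀ = M)
    (hX : IsUnit X.det) : Y = Mᵀ * X⁻¹ᵀ := by
  rw [← hXY, transpose_mul, transpose_transpose, Matrix.mul_assoc, ← transpose_mul,
    nonsing_inv_mul X hX, transpose_one, Matrix.mul_one]

end Matrix

theorem array_gain_block_general {n m q : ℕ}
    (S F : Matrix (Fin n) (Fin n) ℝ) (Rh : Matrix (Fin m) (Fin m) ℝ)
    (Qh : Matrix (Fin q) (Fin q) ℝ) (H : Matrix (Fin m) (Fin n) ℝ)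
    (G : Matrix (Fin n) (Fin q) ℝ) (lam : ℝ)
    (Qo : Matrix (Fin m ⊕ (Fin n ⊕ Fin q)) (Fin m ⊕ (Fin n ⊕ Fin q)) ℝ)
    (hQo : Qo * Qoᵀ = 1)
    (X : Matrix (Fin m) (Fin m) ℝ) (Y : Matrix (Fin n) (Fin m) ℝ)
    (Z : Matrix (Fin n) (Fin n) ℝ)
    (hA : (fromBlocks Rh (fromCols (Real.sqrt lam • (H * S)) 0)
            0 (fromCols (F * S) (G * Qh))) * Qo
          = fromBlocks X (fromCols 0 0) Y (fromCols Z 0)) :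
    X * Yᵀ = Real.sqrt lam • (H * (S * Sᵀ) * Fᵀ) ∧
      (IsUnit X.det → Y = Real.sqrt lam • (F * (S * Sᵀ) * Hᵀ * X⁻¹ᵀ)) := by
  -- The orthogonal factor drops out of the Gram matrix; compare its off-diagonal blocks.
  have hgram := congrArg toBlocks₁₂
    (mul_mul_transpose_of_mul_transpose_eq_one
      (fromBlocks Rh (fromCols (Real.sqrt lam • (H * S)) 0) 0 (fromCols (F * S) (G * Qh))) hQo)
  rw [hA, toBlocks₁₂_fromBlocks_mul_transpose, toBlocks₁₂_fromBlocks_mul_transpose,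
    fromCols_mul_transpose_fromCols_s7, fromCols_mul_transpose_fromCols_s7] at hgram
  have hXY : X * Yᵀ = Real.sqrt lam • (H * (S * Sᵀ) * Fᵀ) := by
    simpa only [Matrix.zero_mul, Matrix.mul_zero, add_zero, zero_add, transpose_zero,
      transpose_mul, Matrix.smul_mul, Matrix.mul_assoc] using hgram
  refine ⟨hXY, fun hX => ?_⟩
  rw [eq_transpose_mul_inv_transpose_of_mul_transpose_eq hXY hX]
  simp only [transpose_smul, transpose_mul, transpose_transpose, Matrix.smul_mul,
    Matrix.mul_assoc]

theorem array_gain_block {n m q : ℕ}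
    (S F : Matrix (Fin n) (Fin n) ℝ) (Rh : Matrix (Fin m) (Fin m) ℝ)
    (Qh : Matrix (Fin q) (Fin q) ℝ) (H : Matrix (Fin m) (Fin n) ℝ)
    (G : Matrix (Fin n) (Fin q) ℝ) (lam : ℝ) (hlam : 0 < lam)
    (Qo : Matrix (Fin m ⊕ (Fin n ⊕ Fin q)) (Fin m ⊕ (Fin n ⊕ Fin q)) ℝ)
    (hQo : Qo * Qoᵀ = 1)
    (X : Matrix (Fin m) (Fin m) ℝ) (Y : Matrix (Fin n) (Fin m) ℝ)
    (Z : Matrix (Fin n) (Fin n) ℝ)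
    (hA : (fromBlocks Rh (fromCols (Real.sqrt lam • (H * S)) 0)
            0 (fromCols (F * S) (G * Qh))) * Qo
          = fromBlocks X (fromCols 0 0) Y (fromCols Z 0)) :
    X * Yᵀ = Real.sqrt lam • (H * (S * Sᵀ) * Fᵀ) ∧
      (IsUnit X.det → Y = Real.sqrt lam • (F * (S * Sᵀ) * Hᵀ * X⁻¹ᵀ)) :=
  array_gain_block_general S F Rh Qh H G lam Qo hQo X Y Z hA
end

section
/- Array algorithm correctness (covariance block): under A 𝒬 = [[X,0,0],[Y,Z,0]] with A = [[R^{1/2}, √λ H S, 0], [0, F S, G Q^{1/2}]], one has Y Yᵀ + Z Zᵀ = F S Sᵀ Fᵀ + G Q^{1/2} Q^{T/2} Gᵀ; consequently Z Zᵀ = F P Fᵀ + G Q Gᵀ − λ K_p R_e^λ K_pᵀ where P = S Sᵀ, Q = Q^{1/2} Q^{T/2}, R_e^λ = λ H P Hᵀ + R, K_p = F P Hᵀ (R_e^λ)⁻¹, assuming X Xᵀ = R_e^λ and X invertible. -/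
/-!
Since `𝒬` is orthogonal, `A Aᵀ = (A 𝒬)(A 𝒬)ᵀ`. Comparing the lower blocks of the two Gram
matrices gives the covariance identity and `Y Xᵀ = √λ F P Hᵀ`; hence `Y = √λ F P Hᵀ X⁻ᵀ` and
`Y Yᵀ = λ F P Hᵀ (X Xᵀ)⁻¹ H P Fᵀ = λ K_p R_e K_pᵀ`, which is subtracted from the first identity.
-/

open Matrix

namespace Matrix

variable {l m n o : Type*} {R : Type*}

theorem mul_transpose_self_eq_of_mul_eq_of_mul_transpose_eq_one [Fintype n] [DecidableEq n]
    [Fintype o] [CommSemiring R] {A : Matrix m n R} {Q : Matrix n o R} {L : Matrix m o R}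
    (hAQ : A * Q = L) (hQ : Q * Qᵀ = 1) : L * Lᵀ = A * Aᵀ := by
  rw [← hAQ, transpose_mul, Matrix.mul_assoc, ← Matrix.mul_assoc Q, hQ, Matrix.one_mul]

theorem fromCols_mul_transpose_fromCols_s8 {n₁ n₂ : Type*} [Fintype n₁] [Fintype n₂]
    [Semiring R] (A₁ : Matrix m n₁ R) (A₂ : Matrix m n₂ R)
    (B₁ : Matrix l n₁ R) (B₂ : Matrix l n₂ R) :
    fromCols A₁ A₂ * (fromCols B₁ B₂)ᵀ = A₁ * B₁ᵀ + A₂ * B₂ᵀ := by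
  rw [transpose_fromCols, fromCols_mul_fromRows]

theorem fromBlocks_mul_transpose_self [Fintype l] [Fintype m]
    [NonUnitalNonAssocSemiring R] (A : Matrix n l R) (B : Matrix n m R) (C : Matrix o l R)
    (D : Matrix o m R) :
    fromBlocks A B C D * (fromBlocks A B C D)ᵀ =
      fromBlocks (A * Aᵀ + B * Bᵀ) (A * Cᵀ + B * Dᵀ) (C * Aᵀ + D * Bᵀ) (C * Cᵀ + D * Dᵀ) := by
  rw [fromBlocks_transpose, fromBlocks_multiply]

theorem mul_transpose_self_eq_of_mul_transpose_eq [Fintype m] [DecidableEq m] [CommRing R]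
    {X : Matrix m m R} (hX : IsUnit X.det) {Y B : Matrix n m R} (hYX : Y * Xᵀ = B) :
    Y * Yᵀ = B * (X * Xᵀ)⁻¹ * Bᵀ := by
  have hY : Y = B * Xᵀ⁻¹ := by
    rw [← hYX, Matrix.mul_assoc, mul_nonsing_inv _ (by rwa [det_transpose]), Matrix.mul_one]
  rw [hY, transpose_mul, transpose_nonsing_inv, transpose_transpose, Matrix.mul_inv_rev]
  simp only [Matrix.mul_assoc]

theorem IsSymm.mul_inv_mul_self_mul_transpose [Fintype m] [DecidableEq m] [CommRing R]
    {P : Matrix m m R} (hP : P.IsSymm) (hdet : IsUnit P.det) (K : Matrix n m R) :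
    K * P⁻¹ * P * (K * P⁻¹)ᵀ = K * P⁻¹ * Kᵀ := by
  rw [Matrix.mul_assoc K, nonsing_inv_mul _ hdet, Matrix.mul_one, transpose_mul,
    transpose_nonsing_inv, hP.eq, Matrix.mul_assoc]

end Matrix

theorem array_covariance_block_general {n m q : ℕ}
    (S F : Matrix (Fin n) (Fin n) ℝ) (Rh : Matrix (Fin m) (Fin m) ℝ)
    (Qh : Matrix (Fin q) (Fin q) ℝ) (H : Matrix (Fin m) (Fin n) ℝ)
    (G : Matrix (Fin n) (Fin q) ℝ) (lam : ℝ) (hlam : 0 < lam)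
    (Qo : Matrix (Fin m ⊕ (Fin n ⊕ Fin q)) (Fin m ⊕ (Fin n ⊕ Fin q)) ℝ)
    (hQo : Qo * Qoᵀ = 1)
    (X : Matrix (Fin m) (Fin m) ℝ) (Y : Matrix (Fin n) (Fin m) ℝ)
    (Z : Matrix (Fin n) (Fin n) ℝ)
    (hA : (fromBlocks Rh (fromCols (Real.sqrt lam • (H * S)) 0)
            0 (fromCols (F * S) (G * Qh))) * Qo
          = fromBlocks X (fromCols 0 0) Y (fromCols Z 0))
    (Re : Matrix (Fin m) (Fin m) ℝ)
    (hX : X * Xᵀ = Re) (hXinv : IsUnit X.det)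
    (Kp : Matrix (Fin n) (Fin m) ℝ)
    (hKp : Kp = F * (S * Sᵀ) * Hᵀ * Re⁻¹) :
    Y * Yᵀ + Z * Zᵀ = F * (S * Sᵀ) * Fᵀ + G * (Qh * Qhᵀ) * Gᵀ ∧
      Z * Zᵀ = F * (S * Sᵀ) * Fᵀ + G * (Qh * Qhᵀ) * Gᵀ - lam • (Kp * Re * Kpᵀ) := by
  have hgram := mul_transpose_self_eq_of_mul_eq_of_mul_transpose_eq_one hA hQo
  simp only [fromBlocks_mul_transpose_self, fromCols_mul_transpose_fromCols_s8, fromBlocks_inj,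
    transpose_zero, Matrix.mul_zero, Matrix.zero_mul, add_zero, zero_add] at hgram
  obtain ⟨-, -, hYX, hcov⟩ := hgram
  have hsum : Y * Yᵀ + Z * Zᵀ = F * (S * Sᵀ) * Fᵀ + G * (Qh * Qhᵀ) * Gᵀ := by
    simpa only [transpose_mul, Matrix.mul_assoc] using hcov
  replace hYX : Y * Xᵀ = √lam • (F * (S * Sᵀ) * Hᵀ) := by
    simpa only [transpose_smul, transpose_mul, Matrix.mul_smul, Matrix.mul_assoc] using hYX
  have hYY : Y * Yᵀ = lam • (F * (S * Sᵀ) * Hᵀ * Re⁻¹ * (F * (S * Sᵀ) * Hᵀ)ᵀ) := by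
    rw [mul_transpose_self_eq_of_mul_transpose_eq hXinv hYX, hX, transpose_smul]
    simp only [Matrix.smul_mul, Matrix.mul_smul, smul_smul, Real.mul_self_sqrt hlam.le]
  have hRe_symm : Re.IsSymm := hX ▸ isSymm_mul_transpose_self X
  have hRe_det : IsUnit Re.det := by
    rw [← hX, det_mul, det_transpose]
    exact hXinv.mul hXinv
  refine ⟨hsum, ?_⟩
  rw [← hsum, hYY, hKp, hRe_symm.mul_inv_mul_self_mul_transpose hRe_det]
  abel

theorem array_covariance_block {n m q : ℕ}
    (S F : Matrix (Fin n) (Fin n) ℝ) (Rh : Matrix (Fin m) (Fin m) ℝ)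
    (Qh : Matrix (Fin q) (Fin q) ℝ) (H : Matrix (Fin m) (Fin n) ℝ)
    (G : Matrix (Fin n) (Fin q) ℝ) (lam : ℝ) (hlam : 0 < lam)
    (hR : (Rh * Rhᵀ).PosDef)
    (Qo : Matrix (Fin m ⊕ (Fin n ⊕ Fin q)) (Fin m ⊕ (Fin n ⊕ Fin q)) ℝ)
    (hQo : Qo * Qoᵀ = 1)
    (X : Matrix (Fin m) (Fin m) ℝ) (Y : Matrix (Fin n) (Fin m) ℝ)
    (Z : Matrix (Fin n) (Fin n) ℝ)
    (hA : (fromBlocks Rh (fromCols (Real.sqrt lam • (H * S)) 0)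
            0 (fromCols (F * S) (G * Qh))) * Qo
          = fromBlocks X (fromCols 0 0) Y (fromCols Z 0))
    (Re : Matrix (Fin m) (Fin m) ℝ)
    (hRe : Re = lam • (H * (S * Sᵀ) * Hᵀ) + Rh * Rhᵀ)
    (hX : X * Xᵀ = Re) (hXinv : IsUnit X.det)
    (Kp : Matrix (Fin n) (Fin m) ℝ)
    (hKp : Kp = F * (S * Sᵀ) * Hᵀ * Re⁻¹) :
    Y * Yᵀ + Z * Zᵀ = F * (S * Sᵀ) * Fᵀ + G * (Qh * Qhᵀ) * Gᵀ ∧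
      Z * Zᵀ = F * (S * Sᵀ) * Fᵀ + G * (Qh * Qhᵀ) * Gᵀ - lam • (Kp * Re * Kpᵀ) :=
  array_covariance_block_general S F Rh Qh H G lam hlam Qo hQo X Y Z hA Re hX hXinv Kp hKp
end

section
/- Extended array residual block: if an orthogonal 𝒬 block-triangularizes the first two block rows of the extended pre-array (with third row [−√λ yᵀ R^{−T/2}, x̂ᵀ S^{−T}, 0]), yielding third-row blocks (αᵀ, βᵀ, γ), then X α = −√λ (y − H x̂), where X is the (1,1) post-array block satisfying X Xᵀ = R_e^λ; hence if X is invertible, α = −√λ X⁻¹ e with e = y − H x̂. -/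
/-!
Since `𝒬` is orthogonal, the pre-array and the post-array have the same Gram matrix `A Aᵀ`.
Comparing the blocks in position (3,1): on the post-array side this is `αᵀ Xᵀ`, on the pre-array
side the factors `R^{-T/2} R^{T/2}` and `S^{-T} Sᵀ` cancel and leave `-√λ (yᵀ - x̂ᵀ Hᵀ)`.
-/

open Matrix

section

variable {R : Type*} [CommRing R]

theorem Matrix.mul_transpose_eq_of_mul_eq_s12 {m k : Type*} [Fintype k] [DecidableEq k]
    {A B : Matrix m k R} {Q : Matrix k k R} (hQ : Q * Qᵀ = 1) (h : A * Q = B) :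
    A * Aᵀ = B * Bᵀ := by
  rw [← h, transpose_mul, Matrix.mul_assoc, ← Matrix.mul_assoc Q, hQ, Matrix.one_mul]

theorem Matrix.mul_transpose_eq_of_fromRows_mul_transpose_eq {m₁ m₂ m₃ k k' : Type*}
    [Fintype k] [Fintype k']
    {A₁ : Matrix m₁ k R} {A₂ : Matrix m₂ k R} {A₃ : Matrix m₃ k R}
    {B₁ : Matrix m₁ k' R} {B₂ : Matrix m₂ k' R} {B₃ : Matrix m₃ k' R}
    (h : fromRows (fromRows A₁ A₂) A₃ * (fromRows (fromRows A₁ A₂) A₃)ᵀ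
      = fromRows (fromRows B₁ B₂) B₃ * (fromRows (fromRows B₁ B₂) B₃)ᵀ) :
    A₃ * A₁ᵀ = B₃ * B₁ᵀ := by
  have := congrArg (fun M => toCols₁ (toCols₁ (toRows₂ M))) h
  simp only [fromRows_mul (fromRows _ _), toRows₂_fromRows, transpose_fromRows, mul_fromCols,
    toCols₁_fromCols] at this
  exact this

theorem Matrix.fromCols_fromCols_mul_transpose {m m' k₁ k₂ k₃ : Type*}
    [Fintype k₁] [Fintype k₂] [Fintype k₃]
    (A₁ : Matrix m k₁ R) (A₂ : Matrix m k₂ R) (A₃ : Matrix m k₃ R)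
    (B₁ : Matrix m' k₁ R) (B₂ : Matrix m' k₂ R) (B₃ : Matrix m' k₃ R) :
    fromCols A₁ (fromCols A₂ A₃) * (fromCols B₁ (fromCols B₂ B₃))ᵀ
      = A₁ * B₁ᵀ + A₂ * B₂ᵀ + A₃ * B₃ᵀ := by
  simp only [transpose_fromCols, fromCols_mul_fromRows, add_assoc]

theorem Matrix.eq_mul_transpose_inv_of_mul_transpose_eq {m k : Type*} [Fintype k] [DecidableEq k]
    {A C : Matrix m k R} {X : Matrix k k R} (hX : IsUnit X.det) (h : A * Xᵀ = C) :
    A = C * X⁻¹ᵀ := by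
  rw [← h, transpose_nonsing_inv, mul_nonsing_inv_cancel_right _ _ (isUnit_det_transpose _ hX)]

theorem residual_row_mul_transpose_measurement_row {l m n q : Type*}
    [Fintype m] [DecidableEq m] [Fintype n] [DecidableEq n] [Fintype q]
    {S : Matrix n n R} {Rh : Matrix m m R} (hS : IsUnit S.det) (hRh : IsUnit Rh.det)
    (H : Matrix m n R) (c : R) (y : Matrix l m R) (xh : Matrix l n R) :
    fromCols (-c • (y * Rhᵀ⁻¹)) (fromCols (xh * Sᵀ⁻¹) (0 : Matrix l q R))
        * (fromCols Rh (fromCols (c • (H * S)) (0 : Matrix m q R)))ᵀ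
      = -c • (y - xh * Hᵀ) := by
  have hRhT : Rhᵀ⁻¹ * Rhᵀ = 1 := nonsing_inv_mul _ (isUnit_det_transpose _ hRh)
  have hST : Sᵀ⁻¹ * Sᵀ = 1 := nonsing_inv_mul _ (isUnit_det_transpose _ hS)
  simp only [fromCols_fromCols_mul_transpose, transpose_smul, transpose_mul, transpose_zero,
    Matrix.mul_zero, add_zero, Matrix.smul_mul, Matrix.mul_smul, Matrix.mul_assoc,
    ← Matrix.mul_assoc Sᵀ⁻¹, hRhT, hST, Matrix.mul_one, Matrix.one_mul]
  rw [smul_sub, neg_smul, neg_smul]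
  abel

end

theorem extended_array_residual_block_general {n m q : ℕ}
    (S F : Matrix (Fin n) (Fin n) ℝ) (Rh : Matrix (Fin m) (Fin m) ℝ)
    (Qh : Matrix (Fin q) (Fin q) ℝ) (H : Matrix (Fin m) (Fin n) ℝ)
    (G : Matrix (Fin n) (Fin q) ℝ) (lam : ℝ)
    (hS : IsUnit S.det) (hRh : IsUnit Rh.det)
    (y : Matrix (Fin 1) (Fin m) ℝ) (xh : Matrix (Fin 1) (Fin n) ℝ)
    (Qo : Matrix (Fin m ⊕ (Fin n ⊕ Fin q)) (Fin m ⊕ (Fin n ⊕ Fin q)) ℝ)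
    (hQo : Qo * Qoᵀ = 1)
    (X : Matrix (Fin m) (Fin m) ℝ) (Y : Matrix (Fin n) (Fin m) ℝ)
    (Z : Matrix (Fin n) (Fin n) ℝ)
    (alph : Matrix (Fin 1) (Fin m) ℝ) (beta : Matrix (Fin 1) (Fin n) ℝ)
    (gam : Matrix (Fin 1) (Fin q) ℝ)
    (hA : (fromRows
            (fromRows
              (fromCols Rh (fromCols (Real.sqrt lam • (H * S)) 0))
              (fromCols 0 (fromCols (F * S) (G * Qh))))
            (fromCols (-(Real.sqrt lam) • (y * Rhᵀ⁻¹))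
              (fromCols (xh * Sᵀ⁻¹) 0))) * Qo
          = fromRows
              (fromRows
                (fromCols X (fromCols 0 0))
                (fromCols Y (fromCols Z 0)))
              (fromCols alph (fromCols beta gam))) :
    alph * Xᵀ = -(Real.sqrt lam) • (y - xh * Hᵀ) ∧
      (IsUnit X.det → alph = -(Real.sqrt lam) • ((y - xh * Hᵀ) * X⁻¹ᵀ)) := by
  have hcross := mul_transpose_eq_of_fromRows_mul_transpose_eq (mul_transpose_eq_of_mul_eq_s12 hQo hA)
  rw [residual_row_mul_transpose_measurement_row hS hRh, fromCols_fromCols_mul_transpose] at hcross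
  have hres : alph * Xᵀ = -(Real.sqrt lam) • (y - xh * Hᵀ) := by
    simpa only [transpose_zero, Matrix.mul_zero, add_zero] using hcross.symm
  refine ⟨hres, fun hX => ?_⟩
  rw [eq_mul_transpose_inv_of_mul_transpose_eq hX hres, Matrix.smul_mul]

theorem extended_array_residual_block {n m q : ℕ}
    (S F : Matrix (Fin n) (Fin n) ℝ) (Rh : Matrix (Fin m) (Fin m) ℝ)
    (Qh : Matrix (Fin q) (Fin q) ℝ) (H : Matrix (Fin m) (Fin n) ℝ)
    (G : Matrix (Fin n) (Fin q) ℝ) (lam : ℝ) (hlam : 0 < lam)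
    (hS : IsUnit S.det) (hRh : IsUnit Rh.det)
    (y : Matrix (Fin 1) (Fin m) ℝ) (xh : Matrix (Fin 1) (Fin n) ℝ)
    (Qo : Matrix (Fin m ⊕ (Fin n ⊕ Fin q)) (Fin m ⊕ (Fin n ⊕ Fin q)) ℝ)
    (hQo : Qo * Qoᵀ = 1)
    (X : Matrix (Fin m) (Fin m) ℝ) (Y : Matrix (Fin n) (Fin m) ℝ)
    (Z : Matrix (Fin n) (Fin n) ℝ)
    (alph : Matrix (Fin 1) (Fin m) ℝ) (beta : Matrix (Fin 1) (Fin n) ℝ)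
    (gam : Matrix (Fin 1) (Fin q) ℝ)
    (hA : (fromRows
            (fromRows
              (fromCols Rh (fromCols (Real.sqrt lam • (H * S)) 0))
              (fromCols 0 (fromCols (F * S) (G * Qh))))
            (fromCols (-(Real.sqrt lam) • (y * Rhᵀ⁻¹))
              (fromCols (xh * Sᵀ⁻¹) 0))) * Qo
          = fromRows
              (fromRows
                (fromCols X (fromCols 0 0))
                (fromCols Y (fromCols Z 0)))
              (fromCols alph (fromCols beta gam)))
    (hX : X * Xᵀ = lam • (H * (S * Sᵀ) * Hᵀ) + Rh * Rhᵀ) :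
    alph * Xᵀ = -(Real.sqrt lam) • (y - xh * Hᵀ) ∧
      (IsUnit X.det → alph = -(Real.sqrt lam) • ((y - xh * Hᵀ) * X⁻¹ᵀ)) :=
  extended_array_residual_block_general S F Rh Qh H G lam hS hRh y xh Qo hQo X Y Z alph beta gam hA
end

section
/- Positive semidefiniteness of the a priori IMCC-KF updated covariance: if P, Q, R are positive semidefinite (P, R positive definite) and 0 < λ ≤ 1, then F P Fᵀ + G Q Gᵀ − λ F P Hᵀ (λ H P Hᵀ + R)⁻¹ H P Fᵀ is positive semidefinite. -/
/-!
The matrix is the Schur complement of the positive definite block `λ H P Hᵀ + R` in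
`[F; √λ H] P [F; √λ H]ᵀ + diag(G Q Gᵀ, R)`, a sum of positive semidefinite matrices, and the
Schur complement of a positive definite block in a positive semidefinite matrix is positive
semidefinite.
-/

open Matrix

namespace Matrix

open scoped ComplexOrder

variable {𝕜 : Type*} [RCLike 𝕜] {k l n : Type*} [Fintype k] [Fintype l] [Fintype n]

theorem PosSemidef.fromBlocks_zero {A : Matrix k k 𝕜} {D : Matrix l l 𝕜}
    (hA : A.PosSemidef) (hD : D.PosSemidef) : (fromBlocks A 0 0 D).PosSemidef := by
  rw [posSemidef_iff_dotProduct_mulVec] at *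
  refine ⟨isHermitian_fromBlocks_iff.mpr ⟨hA.1, by simp, by simp, hD.1⟩, fun x => ?_⟩
  simpa [fromBlocks_mulVec, dotProduct, Fintype.sum_sum_type]
    using add_nonneg (hA.2 (x ∘ Sum.inl)) (hD.2 (x ∘ Sum.inr))

theorem posSemidef_add_sub_mul_inv_mul [DecidableEq l] {P : Matrix n n 𝕜} {C : Matrix k k 𝕜}
    {D : Matrix l l 𝕜} (hP : P.PosSemidef) (hC : C.PosSemidef) (hD : D.PosDef)
    (X : Matrix k n 𝕜) (Y : Matrix l n 𝕜) :
    (X * P * Xᴴ + C - X * P * Yᴴ * (Y * P * Yᴴ + D)⁻¹ * (Y * P * Xᴴ)).PosSemidef := by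
  have hS : (Y * P * Yᴴ + D).PosDef := hD.posSemidef_add (hP.mul_mul_conjTranspose_same Y)
  have := hS.isUnit.invertible
  have hblocks : fromBlocks (X * P * Xᴴ + C) (X * P * Yᴴ) (X * P * Yᴴ)ᴴ (Y * P * Yᴴ + D)
      = fromRows X Y * P * (fromRows X Y)ᴴ + fromBlocks C 0 0 D := by
    simp [conjTranspose_fromRows_eq_fromCols_conjTranspose, fromRows_mul,
      fromBlocks_add, conjTranspose_mul, hP.1.eq, Matrix.mul_assoc]
  have hcross : Y * P * Xᴴ = (X * P * Yᴴ)ᴴ := by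
    simp [conjTranspose_mul, hP.1.eq, Matrix.mul_assoc]
  rw [hcross, ← PosDef.fromBlocks₂₂ _ _ hS, hblocks]
  exact (hP.mul_mul_conjTranspose_same _).add (hC.fromBlocks_zero hD.posSemidef)

end Matrix

theorem apriori_imcckf_cov_psd_general {n m q : ℕ}
    (P F : Matrix (Fin n) (Fin n) ℝ) (R : Matrix (Fin m) (Fin m) ℝ)
    (Q : Matrix (Fin q) (Fin q) ℝ) (H : Matrix (Fin m) (Fin n) ℝ)
    (G : Matrix (Fin n) (Fin q) ℝ) (lam : ℝ)
    (hP : P.PosDef) (hR : R.PosDef) (hQ : Q.PosSemidef)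
    (hlam0 : 0 < lam) :
    (F * P * Fᵀ + G * Q * Gᵀ
      - lam • (F * P * Hᵀ * (lam • (H * P * Hᵀ) + R)⁻¹ * (H * P * Fᵀ))).PosSemidef := by
  set s := √lam
  have hs : s * s = lam := Real.mul_self_sqrt hlam0.le
  have hscaled : lam • (F * P * Hᵀ * (lam • (H * P * Hᵀ) + R)⁻¹ * (H * P * Fᵀ))
      = F * P * (s • H)ᴴ * ((s • H) * P * (s • H)ᴴ + R)⁻¹ * ((s • H) * P * Fᴴ) := by
    simp only [conjTranspose_eq_transpose_of_trivial, transpose_smul, Matrix.smul_mul,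
      Matrix.mul_smul, smul_smul, hs]
  rw [hscaled, ← conjTranspose_eq_transpose_of_trivial F, ← conjTranspose_eq_transpose_of_trivial G]
  exact posSemidef_add_sub_mul_inv_mul hP.posSemidef (hQ.mul_mul_conjTranspose_same G) hR F (s • H)

theorem apriori_imcckf_cov_psd {n m q : ℕ}
    (P F : Matrix (Fin n) (Fin n) ℝ) (R : Matrix (Fin m) (Fin m) ℝ)
    (Q : Matrix (Fin q) (Fin q) ℝ) (H : Matrix (Fin m) (Fin n) ℝ)
    (G : Matrix (Fin n) (Fin q) ℝ) (lam : ℝ)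
    (hP : P.PosDef) (hR : R.PosDef) (hQ : Q.PosSemidef)
    (hlam0 : 0 < lam) (hlam1 : lam ≤ 1) :
    (F * P * Fᵀ + G * Q * Gᵀ
      - lam • (F * P * Hᵀ * (lam • (H * P * Hᵀ) + R)⁻¹ * (H * P * Fᵀ))).PosSemidef :=
  apriori_imcckf_cov_psd_general P F R Q H G lam hP hR hQ hlam0
end
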